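/- arXiv:0812.2220 — 3 statements merged into one kernel-verified Lean document; each statement's English description precedes it below -/
import Mathlib

section
/- Let G be a finite group in which every primitive irreducible character is linear and every proper subgroup of G is an M-group. Then G is a super M-group. -/
open scoped Classical

noncomputable section

/-- `χ` is a (complex) character of `G`: the character of some finite-dimensional
complex representation of `G`. -/
def IsChar {G : Type} [Group G] (χ : G → ℂ) : Prop :=
  ∃ V : FDRep ℂ G, V.character = χ

/-- The induced class function `θ^G` of a function `θ` on a subgroup `H ≤ G`,
given by the usual induction formula (extend `θ` by zero outside `H` and average
over conjugates). -/
def Ind {G : Type} [Group G] [Fintype G] (H : Subgroup G) (θ : ↥H → ℂ) : G → ℂ :=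
  fun g => (Nat.card ↥H : ℂ)⁻¹ *
    ∑ x : G, if h : x⁻¹ * g * x ∈ H then θ ⟨x⁻¹ * g * x, h⟩ else 0

/-- `χ` is an irreducible character: a nonzero character that is not the sum of
two nonzero characters. -/
def IsIrredChar {G : Type} [Group G] (χ : G → ℂ) : Prop :=
  IsChar χ ∧ χ ≠ 0 ∧
    ∀ α β : G → ℂ, IsChar α → IsChar β → α ≠ 0 → β ≠ 0 → χ ≠ α + β

/-- `χ` is monomial: induced from a linear character of some subgroup. -/
def IsMonomialChar {G : Type} [Group G] [Fintype G] (χ : G → ℂ) : Prop :=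
  ∃ (H : Subgroup G) (lam : ↥H → ℂ), IsChar lam ∧ lam 1 = 1 ∧ Ind H lam = χ

/-- `χ` is primitive: irreducible and not induced from any character of a proper
subgroup. -/
def IsPrimitiveChar {G : Type} [Group G] [Fintype G] (χ : G → ℂ) : Prop :=
  IsIrredChar χ ∧ ∀ H : Subgroup G, H ≠ ⊤ → ∀ θ : ↥H → ℂ, IsChar θ → Ind H θ ≠ χ

/-- `χ` is super-monomial: irreducible, and every primitive character of a subgroup
of `G` that induces `χ` is linear. -/
def IsSuperMonomialChar {G : Type} [Group G] [Fintype G] (χ : G → ℂ) : Prop :=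
  IsIrredChar χ ∧
    ∀ (H : Subgroup G) (θ : ↥H → ℂ), IsPrimitiveChar θ → Ind H θ = χ → θ 1 = 1

/-- `G` is an `M`-group: every irreducible character is monomial. -/
def IsMGroup (G : Type) [Group G] [Fintype G] : Prop :=
  ∀ χ : G → ℂ, IsIrredChar χ → IsMonomialChar χ

/-- `G` is a super `M`-group: every irreducible character is super-monomial. -/
def IsSuperMGroup (G : Type) [Group G] [Fintype G] : Prop :=
  ∀ χ : G → ℂ, IsIrredChar χ → IsSuperMonomialChar χ

/-- `n` is a `π`-number: all of its prime divisors lie in `π`. -/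
def IsPiNumber (π : Set ℕ) (n : ℕ) : Prop :=
  ∀ q : ℕ, q.Prime → q ∣ n → q ∈ π

/-- `g` is a `π`-element: its order is a `π`-number. -/
def IsPiElement (π : Set ℕ) {G : Type} [Group G] (g : G) : Prop :=
  IsPiNumber π (orderOf g)

/-- The `π`-partial character `χ^π`: the restriction of `χ` to the set `G^π` of
`π`-elements of `G`, encoded as the function that agrees with `χ` on `π`-elements
and is `0` elsewhere. -/
def restPi (π : Set ℕ) {G : Type} [Group G] (χ : G → ℂ) : G → ℂ :=
  fun g => if IsPiElement π g then χ g else 0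

/-- `φ` is a `π`-partial character of `G`: the restriction to `G^π` of some
character of `G`. -/
def IsPartialChar (π : Set ℕ) {G : Type} [Group G] (φ : G → ℂ) : Prop :=
  ∃ χ : G → ℂ, IsChar χ ∧ φ = restPi π χ

/-- `φ` is an irreducible `π`-partial character (i.e. `φ ∈ I_π(G)`): a nonzero
`π`-partial character that is not the sum of two nonzero `π`-partial characters. -/
def IsIrredPartialChar (π : Set ℕ) {G : Type} [Group G] (φ : G → ℂ) : Prop :=
  IsPartialChar π φ ∧ φ ≠ 0 ∧
    ∀ α β : G → ℂ, IsPartialChar π α → IsPartialChar π β → α ≠ 0 → β ≠ 0 → φ ≠ α + β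

/-- A `π`-partial character is monomial if it is induced from a linear `π`-partial
character of some subgroup. -/
def IsMonomialPartialChar (π : Set ℕ) {G : Type} [Group G] [Fintype G] (φ : G → ℂ) : Prop :=
  ∃ (H : Subgroup G) (lam : ↥H → ℂ), IsPartialChar π lam ∧ lam 1 = 1 ∧ Ind H lam = φ

/-- A `π`-partial character is primitive if it is irreducible and not induced from a
`π`-partial character of any proper subgroup. -/
def IsPrimitivePartialChar (π : Set ℕ) {G : Type} [Group G] [Fintype G] (φ : G → ℂ) : Prop :=
  IsIrredPartialChar π φ ∧
    ∀ H : Subgroup G, H ≠ ⊤ → ∀ θ : ↥H → ℂ, IsPartialChar π θ → Ind H θ ≠ φ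

/-- A `π`-partial character is super-monomial if every primitive irreducible
`π`-partial character of a subgroup of `G` inducing it is linear. -/
def IsSuperMonomialPartialChar (π : Set ℕ) {G : Type} [Group G] [Fintype G] (φ : G → ℂ) : Prop :=
  ∀ (H : Subgroup G) (θ : ↥H → ℂ), IsPrimitivePartialChar π θ → Ind H θ = φ → θ 1 = 1

/-- `G` is `π`-separable: every composition factor of `G` (the simple factor of any
composition series of `G`) is a `π`-group or a `π'`-group. -/
def IsPiSeparable (π : Set ℕ) (G : Type) [Group G] : Prop :=
  ∀ (n : ℕ) (f : Fin (n + 1) → Subgroup G), f 0 = ⊥ → f (Fin.last n) = ⊤ →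
    (∀ i : Fin n,
      f i.castSucc < f i.succ ∧ ((f i.castSucc).subgroupOf (f i.succ)).Normal ∧
      -- the factor `f i.succ / f i.castSucc` is simple
      (∀ L : Subgroup ↥(f i.succ), L.Normal → (f i.castSucc).subgroupOf (f i.succ) < L →
        L = ⊤)) →
    ∀ i : Fin n,
      IsPiNumber π (Nat.card (↥(f i.succ) ⧸ (f i.castSucc).subgroupOf (f i.succ))) ∨
      IsPiNumber πᶜ (Nat.card (↥(f i.succ) ⧸ (f i.castSucc).subgroupOf (f i.succ)))

/-- `S` is a subnormal subgroup of `G`. -/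
def IsSubnormal {G : Type} [Group G] (S : Subgroup G) : Prop :=
  ∃ (n : ℕ) (f : Fin (n + 1) → Subgroup G), f 0 = S ∧ f (Fin.last n) = ⊤ ∧
    ∀ i : Fin n, f i.castSucc ≤ f i.succ ∧ ((f i.castSucc).subgroupOf (f i.succ)).Normal

/-- The determinant character of a representation `V`: `g ↦ det (ρ_V g)`. -/
def detHom {G : Type} [Group G] (V : FDRep ℂ G) : G →* ℂ :=
  LinearMap.det.comp V.ρ

/-- `χ` is a `π`-special character of `H`: `χ` is irreducible, `χ(1)` is a
`π`-number, and for every subnormal subgroup `S` of `H` and every irreducible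
constituent `θ` of the restriction of `χ` to `S`, the order of the determinant
character of `θ` is a `π`-number. -/
def IsPiSpecial (π : Set ℕ) {H : Type} [Group H] (χ : H → ℂ) : Prop :=
  IsIrredChar χ ∧ (∃ d : ℕ, χ 1 = (d : ℂ) ∧ IsPiNumber π d) ∧
    ∀ S : Subgroup H, IsSubnormal S →
      ∀ θ : ↥S → ℂ, IsIrredChar θ →
        (∃ ψ : ↥S → ℂ, IsChar ψ ∧ (fun s : ↥S => χ ↑s) = θ + ψ) →
          ∀ V : FDRep ℂ ↥S, V.character = θ → IsPiNumber π (orderOf (detHom V))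

/-- `M` is a Frobenius group with Frobenius kernel `N`: `N` is a nontrivial proper
normal subgroup of `M` such that the centralizer of every nonidentity element of
`N` is contained in `N`. -/
def IsFrobeniusKernel {M : Type} [Group M] (N : Subgroup M) : Prop :=
  N ≠ ⊥ ∧ N ≠ ⊤ ∧ N.Normal ∧
    ∀ x ∈ N, x ≠ 1 → ∀ y : M, y * x = x * y → y ∈ N

lemma isChar_comp {G H : Type} [Group G] [Group H] (f : G →* H) {θ : H → ℂ} (h : IsChar θ) :
    IsChar (fun g => θ (f g)) := by
  obtain ⟨V, rfl⟩ := h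
  exact ⟨FDRep.of (V.ρ.comp f), rfl⟩

lemma isChar_conj {G : Type} [Group G] {θ : G → ℂ} (h : IsChar θ) (a b : G) :
    θ (a⁻¹ * b * a) = θ b := by
  obtain ⟨V, rfl⟩ := h
  simpa using V.char_conj b a⁻¹

lemma ind_top_apply {G : Type} [Group G] [Fintype G] {θ : ↥(⊤ : Subgroup G) → ℂ}
    (h : IsChar θ) (g : G) :
    Ind ⊤ θ g = θ ⟨g, Subgroup.mem_top g⟩ := by
  unfold Ind
  have key : ∀ x : G,
      (if hx : x⁻¹ * g * x ∈ (⊤ : Subgroup G) then θ ⟨x⁻¹ * g * x, hx⟩ else 0)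
        = θ ⟨g, Subgroup.mem_top g⟩ := by
    intro x
    rw [dif_pos (Subgroup.mem_top _)]
    have hx : (⟨x⁻¹ * g * x, Subgroup.mem_top _⟩ : ↥(⊤ : Subgroup G))
        = (⟨x, Subgroup.mem_top x⟩ : ↥(⊤ : Subgroup G))⁻¹ * ⟨g, Subgroup.mem_top g⟩
          * ⟨x, Subgroup.mem_top x⟩ := rfl
    rw [hx]
    exact isChar_conj h _ _
  rw [Finset.sum_congr rfl fun x _ => key x, Finset.sum_const, Finset.card_univ,
    nsmul_eq_mul, ← mul_assoc, Subgroup.card_top, Nat.card_eq_fintype_card,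
    inv_mul_cancel₀ (by exact_mod_cast Fintype.card_ne_zero), one_mul]

lemma ind_subgroupOf_top {G : Type} [Group G] [Fintype G] (H' : Subgroup G) (θ' : ↥H' → ℂ)
    (g : ↥(⊤ : Subgroup G)) :
    Ind (H'.subgroupOf ⊤) (fun y => θ' (Subgroup.subgroupOfEquivOfLe le_top y)) g
      = Ind H' θ' ↑g := by
  unfold Ind
  congr 1
  · rw [Nat.card_congr (Subgroup.subgroupOfEquivOfLe (le_top (a := H'))).toEquiv]
  · refine Fintype.sum_equiv (Subgroup.topEquiv (G := G)).toEquiv _ _ fun x => ?_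
    have hco : ∀ y : ↥(⊤ : Subgroup G), Subgroup.topEquiv.toEquiv y = (y : G) := fun _ => rfl
    simp only [hco]
    by_cases hx : (x : G)⁻¹ * (g : G) * (x : G) ∈ H'
    · have hx' : x⁻¹ * g * x ∈ H'.subgroupOf ⊤ := Subgroup.mem_subgroupOf.mpr (by simpa using hx)
      rw [dif_pos hx', dif_pos hx]
      exact congrArg θ' (Subtype.ext rfl)
    · have hx' : x⁻¹ * g * x ∉ H'.subgroupOf ⊤ := fun h =>
        hx (by simpa using Subgroup.mem_subgroupOf.mp h)
      rw [dif_neg hx', dif_neg hx]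

/-- If every primitive irreducible character of `G` is linear and every
proper subgroup of `G` is an `M`-group, then `G` is a super `M`-group. -/
theorem superMGroup_of_primitives_linear_of_proper_MGroups
    (G : Type) [Group G] [Fintype G]
    (h1 : ∀ χ : G → ℂ, IsPrimitiveChar χ → χ 1 = 1)
    (h2 : ∀ H : Subgroup G, H ≠ ⊤ → IsMGroup ↥H) :
    IsSuperMGroup G := by
  intro χ hχ
  refine ⟨hχ, ?_⟩
  intro H θ hθ hind
  by_cases hH : H = ⊤
  · subst hH
    have hχθ : ∀ g : G, χ g = θ ⟨g, Subgroup.mem_top g⟩ := fun g => by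
      rw [← hind, ind_top_apply hθ.1.1]
    have hprim : IsPrimitiveChar χ := by
      refine ⟨hχ, ?_⟩
      intro H' hH' θ' hθ' heq
      refine hθ.2 (H'.subgroupOf ⊤) ?_
        (fun y => θ' (Subgroup.subgroupOfEquivOfLe le_top y))
        (by exact isChar_comp (Subgroup.subgroupOfEquivOfLe le_top).toMonoidHom hθ') ?_
      · intro htop
        have hnall : ¬ ∀ a, a ∈ H' := fun hall => hH' ((Subgroup.eq_top_iff' H').mpr hall)
        push_neg at hnall
        obtain ⟨a, ha⟩ := hnall
        have hmem := Subgroup.mem_top (⟨a, Subgroup.mem_top a⟩ : ↥(⊤ : Subgroup G))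
        rw [← htop] at hmem
        exact ha (Subgroup.mem_subgroupOf.mp hmem)
      · funext g
        rw [ind_subgroupOf_top, heq, hχθ]
    have h1' := h1 χ hprim
    rw [hχθ 1] at h1'
    exact h1'
  · obtain ⟨K, lam, hlam, hlam1, hKind⟩ := h2 H hH θ hθ.1
    rcases eq_or_ne K ⊤ with rfl | hK
    · have hval := ind_top_apply hlam (1 : ↥H)
      rw [hKind] at hval
      rw [hval]
      exact hlam1
    · exact absurd hKind (hθ.2 K hK lam hlam)
end
end

section
/- Let π be a set of primes, let G be a finite π-separable group, and let H be a subgroup of G. Suppose μ is a π-special character of H, let ν = μ^π, and assume that the induced π-partial character φ = ν^G lies in I_π(G). If λ is a π'-special linear character of H, then the induced character (μλ)^G satisfies ((μλ)^G)^π = φ, i.e., (μλ)^G is a π-lift of φ. -/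
open scoped Classical

noncomputable section

/-! Two facts combine. Inducing commutes with restricting to `π`-elements, because conjugate
elements have the same order. A linear `π'`-special character `λ` is its own determinant, so by
`π'`-specialness its order is a `π'`-number; its value at a `π`-element `k` is then a root of unity
of order dividing both `o(k)` and `o(λ)`, hence `1`. So `(μλ)^π = μ^π = ν`, and inducing gives the
claim. -/

lemma isPiElement_conj_iff (π : Set ℕ) {G : Type} [Group G] (x g : G) :
    IsPiElement π (x⁻¹ * g * x) ↔ IsPiElement π g := by
  rw [IsPiElement, IsPiElement,
    (show SemiconjBy x (x⁻¹ * g * x) g by simp [SemiconjBy, mul_assoc]).orderOf_eq]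

theorem restPi_Ind (π : Set ℕ) {G : Type} [Group G] [Fintype G] (H : Subgroup G)
    (θ : ↥H → ℂ) : restPi π (Ind H θ) = Ind H (restPi π θ) := by
  funext g
  have hconj (x : G) (hx : x⁻¹ * g * x ∈ H) :
      IsPiElement π (⟨x⁻¹ * g * x, hx⟩ : H) ↔ IsPiElement π g := by
    rw [IsPiElement, Subgroup.orderOf_mk, ← IsPiElement, isPiElement_conj_iff]
  by_cases hg : IsPiElement π g <;> simp [restPi, Ind, hconj, hg]

lemma isSubnormal_top {G : Type} [Group G] : IsSubnormal (⊤ : Subgroup G) :=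
  ⟨0, fun _ => ⊤, rfl, rfl, fun i => i.elim0⟩

lemma IsPiNumber.coprime_of_compl {π : Set ℕ} {m n : ℕ} (hm : IsPiNumber π m)
    (hn : IsPiNumber πᶜ n) : m.Coprime n :=
  Nat.coprime_of_dvd fun p hp hpm hpn => hn p hp hpn (hm p hp hpm)

lemma MonoidHom.apply_eq_one_of_coprime_orderOf {K M : Type*} [Group K] [CommMonoid M]
    (f : K →* M) {k : K} (h : (orderOf k).Coprime (orderOf f)) : f k = 1 := by
  have hk : f k ^ orderOf k = 1 := by rw [← map_pow, pow_orderOf_eq_one, map_one]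
  have hf : f k ^ orderOf f = 1 := by rw [← MonoidHom.pow_apply, pow_orderOf_eq_one, one_apply]
  simpa [h.gcd_eq_one] using pow_gcd_eq_one.mpr ⟨hk, hf⟩

lemma LinearMap.trace_eq_det_of_finrank_eq_one {R M : Type*} [Field R] [AddCommGroup M]
    [Module R M] (h : Module.finrank R M = 1) (f : M →ₗ[R] M) : trace R M f = LinearMap.det f := by
  have : FiniteDimensional R M := Module.finite_of_finrank_eq_succ h
  let b : Module.Basis (Fin 1) R M := Module.finBasisOfFinrankEq R M h
  rw [trace_eq_matrix_trace R b, ← det_toMatrix b, Matrix.trace_fin_one, Matrix.det_fin_one]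

lemma FDRep.character_eq_detHom_of_char_one {K : Type} [Group K] {V : FDRep ℂ K}
    (h : V.character 1 = 1) : V.character = detHom V := by
  have hrank : Module.finrank ℂ V = 1 := by exact_mod_cast V.char_one.symm.trans h
  funext g
  exact LinearMap.trace_eq_det_of_finrank_eq_one hrank (V.ρ g)

section Characters

variable {K : Type} [Group K]

lemma isChar_zero : IsChar (0 : K → ℂ) := by
  refine ⟨FDRep.of (1 : Representation ℂ K (Fin 0 → ℂ)), funext fun g => ?_⟩
  simp [FDRep.character]

lemma IsChar.restrict {χ : K → ℂ} (hχ : IsChar χ) (S : Subgroup K) :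
    IsChar fun s : S => χ s := by
  obtain ⟨V, rfl⟩ := hχ
  exact ⟨FDRep.of (V.ρ.comp S.subtype), rfl⟩

lemma IsChar.exists_apply_one_eq_natCast {χ : K → ℂ} (hχ : IsChar χ) (h0 : χ ≠ 0) :
    ∃ n : ℕ, n ≠ 0 ∧ χ 1 = n := by
  obtain ⟨V, rfl⟩ := hχ
  refine ⟨_, fun hn => h0 (funext fun g => ?_), V.char_one⟩
  have : Subsingleton V := Module.finrank_zero_iff.mp hn
  simp [FDRep.character, Subsingleton.elim (V.ρ g) 0]

lemma isIrredChar_of_apply_one_eq_one {χ : K → ℂ} (hχ : IsChar χ) (h1 : χ 1 = 1) :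
    IsIrredChar χ := by
  refine ⟨hχ, fun h0 => by simp [h0] at h1, fun α β hα hβ hα0 hβ0 hsum => ?_⟩
  obtain ⟨a, ha, hαa⟩ := hα.exists_apply_one_eq_natCast hα0
  obtain ⟨b, hb, hβb⟩ := hβ.exists_apply_one_eq_natCast hβ0
  have hab : ((a + b : ℕ) : ℂ) = 1 := by
    rw [Nat.cast_add, ← hαa, ← hβb, ← Pi.add_apply, ← hsum, h1]
  have : a + b = 1 := by exact_mod_cast hab
  omega

theorem IsPiSpecial.apply_eq_one_of_isPiElement {π : Set ℕ} {lam : K → ℂ}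
    (hlam : IsPiSpecial πᶜ lam) (hlin : lam 1 = 1) {k : K} (hk : IsPiElement π k) :
    lam k = 1 := by
  set θ : (⊤ : Subgroup K) → ℂ := fun s => lam s
  obtain ⟨V, hV⟩ : IsChar θ := hlam.1.1.restrict ⊤
  have hθ : IsIrredChar θ := isIrredChar_of_apply_one_eq_one ⟨V, hV⟩ hlin
  have hdet : IsPiNumber πᶜ (orderOf (detHom V)) :=
    hlam.2.2 ⊤ isSubnormal_top θ hθ ⟨0, isChar_zero, (add_zero θ).symm⟩ V hV
  have hk' : IsPiElement π (⟨k, Subgroup.mem_top k⟩ : (⊤ : Subgroup K)) := by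
    rwa [IsPiElement, Subgroup.orderOf_mk]
  calc lam k = detHom V ⟨k, Subgroup.mem_top k⟩ := by
        rw [← FDRep.character_eq_detHom_of_char_one (hV ▸ hlin), hV]
    _ = 1 := (detHom V).apply_eq_one_of_coprime_orderOf (hk'.coprime_of_compl hdet)

end Characters

theorem induced_product_is_pi_lift_general
    (π : Set ℕ) (G : Type) [Group G] [Fintype G]
    (H : Subgroup G) (μ : ↥H → ℂ)
    (ν : ↥H → ℂ) (hν : ν = restPi π μ)
    (φ : G → ℂ) (hφ : φ = Ind H ν)
    (lam : ↥H → ℂ) (hlam : IsPiSpecial πᶜ lam) (hlin : lam 1 = 1) :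
    restPi π (Ind H (μ * lam)) = φ := by
  have hres : restPi π (μ * lam) = restPi π μ := by
    funext h
    by_cases hh : IsPiElement π h
    · simp [restPi, hh, hlam.apply_eq_one_of_isPiElement hlin hh]
    · simp [restPi, hh]
  rw [restPi_Ind, hres, ← hν, ← hφ]

/-- Let `G` be `π`-separable, `H ≤ G`, `μ` a `π`-special character of
`H`, `ν = μ^π`, and suppose `φ = ν^G ∈ I_π(G)`. If `λ` is a `π'`-special linear
character of `H`, then `((μλ)^G)^π = φ`, i.e. `(μλ)^G` is a `π`-lift of `φ`. -/
theorem induced_product_is_pi_lift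
    (π : Set ℕ) (G : Type) [Group G] [Fintype G] (hsep : IsPiSeparable π G)
    (H : Subgroup G) (μ : ↥H → ℂ) (hμ : IsPiSpecial π μ)
    (ν : ↥H → ℂ) (hν : ν = restPi π μ)
    (φ : G → ℂ) (hφ : φ = Ind H ν) (hφI : IsIrredPartialChar π φ)
    (lam : ↥H → ℂ) (hlam : IsPiSpecial πᶜ lam) (hlin : lam 1 = 1) :
    restPi π (Ind H (μ * lam)) = φ :=
  induced_product_is_pi_lift_general π G H μ ν hν φ hφ lam hlam hlin
end
end

section
/- Let p be a prime and let G be a finite group having a normal subgroup N such that N is a p-group and G/N is an abelian p'-group. Then every irreducible character of G is a {p}-lift. -/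
open scoped Classical

noncomputable section

/-!
The `p`-elements of `G` are exactly the elements of `N`, so it suffices to show that the
restriction to `N` of an irreducible character `χ` is never the restriction of a sum `α + β` of
two nonzero characters of `G`. For the linear characters `λ` of the abelian group `G/N`, the
twists `χλ` are irreducible, and by orthogonality of the `λ` the total multiplicity
`∑_λ ⟨α, χλ⟩` only depends on the restriction of `α` to `N`. Hence
`∑_λ (⟨α, χλ⟩ + ⟨β, χλ⟩) = ∑_λ ⟨χ, χλ⟩ ≥ ⟨χ, χ⟩ = 1`, so some `χλ` is a constituent of `α`,
say. Then `α(1) ≥ χ(1) = α(1) + β(1)`, which forces `β = 0`.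
-/

open Module

namespace Representation

variable {k G V W : Type*} [Field k] [Monoid G] [AddCommGroup V] [Module k V]
  [AddCommGroup W] [Module k W]

lemma char_prod [FiniteDimensional k V] [FiniteDimensional k W] (ρ : Representation k G V)
    (σ : Representation k G W) (g : G) :
    (ρ.prod σ).character g = ρ.character g + σ.character g :=
  LinearMap.trace_prodMap' _ _

lemma character_eq_zero [Subsingleton V] (ρ : Representation k G V) : ρ.character = 0 := by
  ext g
  simp [character, Subsingleton.elim (ρ g) 0]

lemma nontrivial_of_character_ne_zero {ρ : Representation k G V} (h : ρ.character ≠ 0) :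
    Nontrivial V :=
  not_subsingleton_iff_nontrivial.1 fun _ => h ρ.character_eq_zero

lemma character_ne_zero [CharZero k] [FiniteDimensional k V] [Nontrivial V]
    (ρ : Representation k G V) : ρ.character ≠ 0 := by
  intro h
  simpa [char_one, finrank_pos.ne'] using congrFun h 1

def twist (ρ : Representation k G V) (μ : G →* kˣ) : Representation k G V where
  toFun g := (μ g : k) • ρ g
  map_one' := by simp
  map_mul' g h := by simp only [map_mul, Units.val_mul, smul_mul_smul_comm]

variable (ρ : Representation k G V) (μ : G →* kˣ)

@[simp] lemma twist_apply (g : G) : ρ.twist μ g = (μ g : k) • ρ g := rfl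

@[simp] lemma twist_one : ρ.twist 1 = ρ := by ext; simp

lemma char_twist (g : G) : (ρ.twist μ).character g = μ g * ρ.character g := by
  simp [character]

def subrepresentationTwistOrderIso : Subrepresentation (ρ.twist μ) ≃o Subrepresentation ρ where
  toFun σ := ⟨σ.toSubmodule, fun g v hv => by
    simpa [Submodule.smul_mem_iff _ (Units.ne_zero (μ g))] using σ.apply_mem_toSubmodule g hv⟩
  invFun σ := ⟨σ.toSubmodule, fun g v hv => by
    simpa [Submodule.smul_mem_iff _ (Units.ne_zero (μ g))] using σ.apply_mem_toSubmodule g hv⟩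
  left_inv _ := rfl
  right_inv _ := rfl
  map_rel_iff' := Iff.rfl

instance [ρ.IsIrreducible] : (ρ.twist μ).IsIrreducible :=
  (subrepresentationTwistOrderIso ρ μ).isSimpleOrder

end Representation

namespace Subrepresentation

variable {k G V : Type*} [Field k] [Monoid G] [AddCommGroup V] [Module k V]
  {ρ : Representation k G V} {σ τ : Subrepresentation ρ}

lemma toSubmodule_eq_bot_iff : σ.toSubmodule = ⊥ ↔ σ = ⊥ :=
  toSubmodule_injective.eq_iff' rfl

lemma character_ne_zero [CharZero k] [FiniteDimensional k V] (hσ : σ ≠ ⊥) :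
    σ.toRepresentation.character ≠ 0 :=
  have := Submodule.nontrivial_iff_ne_bot.2 (toSubmodule_eq_bot_iff.not.2 hσ)
  Representation.character_ne_zero _

lemma isCompl_toSubmodule (h : IsCompl σ τ) : IsCompl σ.toSubmodule τ.toSubmodule where
  disjoint := disjoint_iff.2 <| by rw [← toSubmodule_inf, disjoint_iff.1 h.disjoint]; rfl
  codisjoint := codisjoint_iff.2 <| by rw [← toSubmodule_sup, codisjoint_iff.1 h.codisjoint]; rfl

def prodEquivOfIsCompl (h : IsCompl σ τ) :
    (σ.toRepresentation.prod τ.toRepresentation).Equiv ρ :=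
  .mk (Submodule.prodEquivOfIsCompl _ _ (isCompl_toSubmodule h)) fun g => by
    ext ⟨x, y⟩ <;> simp [toRepresentation]

lemma character_add_of_isCompl [FiniteDimensional k V] (h : IsCompl σ τ) :
    σ.toRepresentation.character + τ.toRepresentation.character = ρ.character := by
  ext g
  rw [← Representation.char_iso (prodEquivOfIsCompl h), Pi.add_apply, Representation.char_prod]

end Subrepresentation

theorem IsIrredChar.isIrreducible {G : Type} [Group G] [Finite G] {V : FDRep ℂ G}
    (hV : IsIrredChar V.character) :
    Representation.IsIrreducible (V.ρ : Representation ℂ G V) := by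
  obtain ⟨-, hne, hsplit⟩ := hV
  have : Nontrivial V := Representation.nontrivial_of_character_ne_zero hne
  have : Nontrivial (Subrepresentation (V.ρ : Representation ℂ G V)) :=
    ⟨⊥, ⊤, fun h => bot_ne_top (congrArg Subrepresentation.toSubmodule h)⟩
  refine ⟨fun σ => ?_⟩
  obtain ⟨τ, hτ⟩ := exists_isCompl σ
  by_contra! hσ
  have hτ0 : τ ≠ ⊥ := by
    rintro rfl
    exact hσ.2 (eq_top_of_isCompl_bot hτ)
  exact hsplit _ _ ⟨FDRep.of σ.toRepresentation, rfl⟩ ⟨FDRep.of τ.toRepresentation, rfl⟩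
    (Subrepresentation.character_ne_zero hσ.1) (Subrepresentation.character_ne_zero hτ0)
    (Subrepresentation.character_add_of_isCompl hτ).symm
theorem MonoidHom.sum_apply_eq_zero_of_ne_one {R Q : Type*} [CommRing R] [IsDomain R]
    [CommGroup Q] [Finite Q] [HasEnoughRootsOfUnity R (Monoid.exponent Q)] [Fintype (Q →* Rˣ)]
    {q : Q} (hq : q ≠ 1) : ∑ ψ : Q →* Rˣ, (ψ q : R) = 0 := by
  obtain ⟨ψ₀, hψ₀⟩ := CommGroup.exists_apply_ne_one_of_hasEnoughRootsOfUnity Q R hq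
  refine sum_hom_units_eq_zero ((Units.coeHom R).comp (MonoidHom.eval q)) fun h => hψ₀ ?_
  exact Units.ext (by simpa using DFunLike.congr_fun h ψ₀)

namespace Representation

lemma finrank_le_of_finrank_intertwiningMap_pos {k G V W : Type*} [Field k] [Monoid G]
    [AddCommGroup V] [Module k V] [AddCommGroup W] [Module k W] [FiniteDimensional k W]
    {σ : Representation k G W} {ρ : Representation k G V} [ρ.IsIrreducible]
    (h : 0 < finrank k (IntertwiningMap σ ρ)) : finrank k V ≤ finrank k W := by
  have := Module.nontrivial_of_finrank_pos h
  obtain ⟨f, hf⟩ := exists_ne (0 : IntertwiningMap σ ρ)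
  exact LinearMap.finrank_le_finrank_of_surjective (f := f.toLinearMap)
    ((IsIrreducible.surjective_or_eq_zero f).resolve_right hf)

variable {G Q V W U X : Type*} [Group G] [Fintype G] [CommGroup Q]
  [AddCommGroup V] [Module ℂ V] [FiniteDimensional ℂ V]
  [AddCommGroup W] [Module ℂ W] [FiniteDimensional ℂ W]
  [AddCommGroup U] [Module ℂ U] [FiniteDimensional ℂ U]
  [AddCommGroup X] [Module ℂ X] [FiniteDimensional ℂ X] (φ : G →* Q)

section Sums

variable [Fintype (Q →* ℂˣ)]

lemma sum_finrank_intertwiningMap_twist (σ : Representation ℂ G W)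
    (ρ : Representation ℂ G V) :
    ∑ ψ : Q →* ℂˣ, (finrank ℂ (IntertwiningMap σ (ρ.twist (ψ.comp φ))) : ℂ) =
      (Nat.card G : ℂ)⁻¹ * ∑ g, (∑ ψ : Q →* ℂˣ, (ψ (φ g) : ℂ)) *
        (ρ.character g * σ.character g⁻¹) := by
  simp_rw [← card_inv_mul_sum_char_mul_char_eq_finrank, char_twist, ← Finset.mul_sum,
    Finset.sum_mul]
  rw [Finset.sum_comm]
  simp [mul_assoc]

lemma sum_finrank_intertwiningMap_twist_eq_add [Finite Q] (ρ : Representation ℂ G V)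
    (σ : Representation ℂ G W) (τ : Representation ℂ G U) (π : Representation ℂ G X)
    (h : ∀ g ∈ φ.ker, ρ.character g = σ.character g + τ.character g) :
    ∑ ψ : Q →* ℂˣ, finrank ℂ (IntertwiningMap ρ (π.twist (ψ.comp φ))) =
      ∑ ψ : Q →* ℂˣ, finrank ℂ (IntertwiningMap σ (π.twist (ψ.comp φ))) +
        ∑ ψ : Q →* ℂˣ, finrank ℂ (IntertwiningMap τ (π.twist (ψ.comp φ))) := by
  apply Nat.cast_injective (R := ℂ)
  push_cast
  rw [sum_finrank_intertwiningMap_twist, sum_finrank_intertwiningMap_twist,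
    sum_finrank_intertwiningMap_twist, ← mul_add, ← Finset.sum_add_distrib]
  congr 1
  refine Finset.sum_congr rfl fun g _ => ?_
  by_cases hg : φ g = 1
  · rw [h g⁻¹ (by simp [hg])]
    ring
  · rw [MonoidHom.sum_apply_eq_zero_of_ne_one hg]
    ring

end Sums

theorem exists_mem_ker_character_ne_add [Finite Q] (ρ : Representation ℂ G V)
    (σ : Representation ℂ G W) (τ : Representation ℂ G U) [ρ.IsIrreducible] [Nontrivial W]
    [Nontrivial U] : ∃ g ∈ φ.ker, ρ.character g ≠ σ.character g + τ.character g := by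
  let _ : Fintype (Q →* ℂˣ) := Fintype.ofFinite _
  by_contra! h
  have hdim : finrank ℂ V = finrank ℂ W + finrank ℂ U := by
    have h1 := h 1 φ.ker.one_mem
    simp only [char_one] at h1
    exact_mod_cast h1
  have hself :
      0 < ∑ ψ : Q →* ℂˣ, finrank ℂ (IntertwiningMap ρ (ρ.twist (ψ.comp φ))) :=
    Finset.sum_pos' (fun _ _ => Nat.zero_le _) ⟨1, Finset.mem_univ _, by
      rw [MonoidHom.one_comp, twist_one, IsIrreducible.finrank_intertwiningMap_self]
      exact one_pos⟩
  rw [sum_finrank_intertwiningMap_twist_eq_add φ ρ σ τ ρ h] at hself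
  obtain ⟨ψ, -, hψ⟩ | ⟨ψ, -, hψ⟩ := (Nat.add_pos_iff_pos_or_pos.1 hself).imp
    Finset.sum_pos_iff.1 Finset.sum_pos_iff.1
  · have := finrank_le_of_finrank_intertwiningMap_pos hψ
    have := finrank_pos (R := ℂ) (M := U)
    omega
  · have := finrank_le_of_finrank_intertwiningMap_pos hψ
    have := finrank_pos (R := ℂ) (M := W)
    omega

end Representation

section PiElements

variable {G : Type} [Group G]

lemma isPiElement_one (π : Set ℕ) : IsPiElement π (1 : G) := by
  intro q hq hdvd
  rw [orderOf_one, Nat.dvd_one] at hdvd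
  exact absurd hdvd hq.ne_one

lemma isPiElement_singleton_iff [Finite G] {p : ℕ} (hp : p.Prime) {g : G} :
    IsPiElement {p} g ↔ ∃ k, orderOf g = p ^ k := by
  constructor
  · intro h
    exact ⟨_, Nat.eq_prime_pow_of_unique_prime_dvd (orderOf_pos g).ne'
      fun hq hdvd => h _ hq hdvd⟩
  · rintro ⟨k, hk⟩ q hq hdvd
    rw [hk] at hdvd
    exact (Nat.prime_dvd_prime_iff_eq hq hp).1 (hq.dvd_of_dvd_pow hdvd)

lemma isPiElement_singleton_iff_mem [Finite G] {p : ℕ} (hp : p.Prime) {N : Subgroup G} [N.Normal]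
    (hN : IsPGroup p N) (hNG : ¬ p ∣ Nat.card (G ⧸ N)) {g : G} :
    IsPiElement {p} g ↔ g ∈ N := by
  have := Fact.mk hp
  rw [isPiElement_singleton_iff hp]
  constructor
  · rintro ⟨k, hk⟩
    have hcop : (p ^ k).Coprime (Nat.card (G ⧸ N)) :=
      ((Nat.Prime.coprime_iff_not_dvd hp).2 hNG).pow_left k
    rw [← QuotientGroup.eq_one_iff, ← orderOf_eq_one_iff]
    exact Nat.eq_one_of_dvd_coprimes hcop (hk ▸ orderOf_map_dvd (QuotientGroup.mk' N) g)
      (orderOf_dvd_natCard _)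
  · intro hg
    obtain ⟨k, hk⟩ := IsPGroup.iff_orderOf.1 hN ⟨g, hg⟩
    exact ⟨k, by rwa [Subgroup.orderOf_mk] at hk⟩

end PiElements

lemma ne_zero_of_restPi_ne_zero {π : Set ℕ} {G : Type} [Group G] {χ : G → ℂ}
    (h : restPi π χ ≠ 0) : χ ≠ 0 := by
  rintro rfl
  exact h (by ext; simp [restPi])

/-- Let `p` be a prime and `G` a finite group with a normal subgroup
`N` such that `N` is a `p`-group and `G/N` is an abelian `p'`-group. Then every
irreducible character of `G` is a `{p}`-lift. -/
theorem every_char_is_p_lift_of_pGroup_by_abelian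
    (p : ℕ) (hp : p.Prime)
    (G : Type) [Group G] [Fintype G]
    (N : Subgroup G) [N.Normal] (hNp : IsPGroup p ↥N)
    (hab : ∀ x y : G ⧸ N, x * y = y * x)
    (hp' : ¬ p ∣ Nat.card (G ⧸ N)) :
    ∀ χ : G → ℂ, IsIrredChar χ → IsIrredPartialChar {p} (restPi {p} χ) := by
  intro χ hχ
  obtain ⟨V, rfl⟩ := hχ.1
  have := hχ.isIrreducible
  have := Representation.nontrivial_of_character_ne_zero hχ.2.1
  let _ : CommGroup (G ⧸ N) := { mul_comm := hab }
  refine ⟨⟨_, ⟨V, rfl⟩, rfl⟩, fun h => ?_, ?_⟩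
  · simpa [restPi, isPiElement_one, FDRep.char_one, finrank_pos.ne'] using congrFun h 1
  · rintro _ _ ⟨_, ⟨A, rfl⟩, rfl⟩ ⟨_, ⟨B, rfl⟩, rfl⟩ hA hB hsum
    have := Representation.nontrivial_of_character_ne_zero (ne_zero_of_restPi_ne_zero hA)
    have := Representation.nontrivial_of_character_ne_zero (ne_zero_of_restPi_ne_zero hB)
    obtain ⟨g, hg, hne⟩ := Representation.exists_mem_ker_character_ne_add
      (QuotientGroup.mk' N) V.ρ A.ρ B.ρ
    have hgN : IsPiElement {p} g :=
      (isPiElement_singleton_iff_mem hp hNp hp').2 (QuotientGroup.ker_mk' N ▸ hg)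
    have hsum_g := congrFun hsum g
    simp only [restPi, hgN, if_true, Pi.add_apply] at hsum_g
    exact hne hsum_g
end
end
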